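/- For terminating impartial games G, H, if Γ₀(G) ≠ Γ₀(H), say Γ₀(G_{i₀}) < Γ₀(H_{i₀}) where these are components at a maximal index i₀ of a shape S with all other components equal, then Γ₀(S ⋈ G) ≠ Γ₀(S ⋈ H). (Converse of the special substitution theorem.) -/

import Mathlib

universe u

/-- Nimbers (removed from Mathlib; restored with their old meaning): a type synonym of `Ordinal`. -/
def Nimber : Type (u + 1) := Ordinal.{u}

namespace Nimber

noncomputable instance instCCLOBNimber : ConditionallyCompleteLinearOrderBot Nimber.{u} :=
  inferInstanceAs (ConditionallyCompleteLinearOrderBot Ordinal.{u})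

end Nimber

namespace SetTheory

/-- Pre-games (removed from Mathlib; restored with their old meaning). -/
inductive PGame : Type (u + 1)
  | mk : ∀ α β : Type u, (α → PGame) → (β → PGame) → PGame

namespace PGame

def LeftMoves : PGame.{u} → Type u
  | mk l _ _ _ => l

def RightMoves : PGame.{u} → Type u
  | mk _ r _ _ => r

def moveLeft : ∀ g : PGame.{u}, LeftMoves g → PGame.{u}
  | mk _ _ L _ => L

def moveRight : ∀ g : PGame.{u}, RightMoves g → PGame.{u}
  | mk _ _ _ R => R

instance instZeroPGame : Zero PGame.{u} :=
  ⟨⟨PEmpty, PEmpty, PEmpty.elim, PEmpty.elim⟩⟩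

noncomputable def neg (x : PGame.{u}) : PGame.{u} :=
  PGame.rec (motive := fun _ => PGame.{u}) (fun l r _ _ ihL ihR => mk r l ihR ihL) x

noncomputable instance instNegPGame : Neg PGame.{u} :=
  ⟨neg⟩

/-- `lePair x y = (x ≤ y, y ≤ x)`, where `x ≤ y` iff no `x.moveLeft i` has `y ≤ x.moveLeft i`
and no `y.moveRight j` has `y.moveRight j ≤ x` (Mathlib's old order on pre-games). -/
noncomputable def lePair (x : PGame.{u}) : PGame.{u} → Prop × Prop :=
  PGame.rec (motive := fun _ => PGame.{u} → Prop × Prop)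
    (fun _ _ _ _ IHL IHR y =>
      PGame.rec (motive := fun _ => Prop × Prop)
        (fun _ _ yL yR ihL ihR =>
          ((∀ i, ¬ (IHL i (mk _ _ yL yR)).2) ∧ ∀ j, ¬ (ihR j).2,
            (∀ i, ¬ (ihL i).1) ∧ ∀ j, ¬ (IHR j (mk _ _ yL yR)).1)) y) x

/-- `G` is equivalent to `-G`, and so are all its options, hereditarily. -/
def ImpartialAux (G : PGame.{u}) : Prop :=
  PGame.rec (motive := fun _ => Prop)
    (fun l r L R ihL ihR =>
      ((lePair (mk l r L R) (-(mk l r L R))).1 ∧ (lePair (mk l r L R) (-(mk l r L R))).2) ∧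
        (∀ i, ihL i) ∧ ∀ j, ihR j) G

class Impartial (G : PGame.{u}) : Prop where
  out : ImpartialAux G

/-- The Grundy value: the least nimber not among the Grundy values of the left options. -/
noncomputable def grundyValue (G : PGame.{u}) : Nimber.{u} :=
  PGame.rec (motive := fun _ => Nimber.{u}) (fun _ _ _ _ ihL _ => sInf (Set.range ihL)ᶜ) G

end PGame

end SetTheory

open SetTheory PGame Nimber

noncomputable section
open Classical in
/-- The state resulting from a (Left) move in component `i₀` of an ordered join:
all components strictly above `i₀` are replaced by the empty game `0`. -/
def ojNextL {S : Type} [PartialOrder S] (x : S → PGame) (i₀ : S) (j : (x i₀).LeftMoves) :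
    S → PGame :=
  fun i => if i = i₀ then (x i₀).moveLeft j else if i₀ < i then 0 else x i

open Classical in
def ojNextR {S : Type} [PartialOrder S] (x : S → PGame) (i₀ : S) (j : (x i₀).RightMoves) :
    S → PGame :=
  fun i => if i = i₀ then (x i₀).moveRight j else if i₀ < i then 0 else x i

/-- The move relation of the ordered join: `OJRel y x` iff `y` results from `x` by a single move. -/
def OJRel {S : Type} [PartialOrder S] (y x : S → PGame) : Prop :=
  (∃ i₀ j, y = ojNextL x i₀ j) ∨ (∃ i₀ j, y = ojNextR x i₀ j)

theorem ojrel_L {S : Type} [PartialOrder S] (x : S → PGame) (i₀ : S) (j : (x i₀).LeftMoves) :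
    OJRel (ojNextL x i₀ j) x := Or.inl ⟨i₀, j, rfl⟩

theorem ojrel_R {S : Type} [PartialOrder S] (x : S → PGame) (i₀ : S) (j : (x i₀).RightMoves) :
    OJRel (ojNextR x i₀ j) x := Or.inr ⟨i₀, j, rfl⟩

/-- The ordered join of a family of games, as a game, given a termination certificate. -/
def ojoinAcc {S : Type} [PartialOrder S] : ∀ x : S → PGame, Acc OJRel x → PGame := fun x h =>
  Acc.rec (motive := fun x _ => PGame)
    (fun x _ ih =>
      PGame.mk (Σ i₀ : S, (x i₀).LeftMoves) (Σ i₀ : S, (x i₀).RightMoves)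
        (fun p => ih _ (ojrel_L x p.1 p.2))
        (fun p => ih _ (ojrel_R x p.1 p.2))) h

open Classical in
/-- The ordered join `S ⋈ G` of a family of games `G` over the poset `S`.
(Defined as `0` in the degenerate non-terminating case.) -/
def ojoin {S : Type} [PartialOrder S] (x : S → PGame) : PGame :=
  if h : Acc OJRel x then ojoinAcc x h else 0

/-- The Grundy set `Γ₁(G)`: the set of Grundy numbers of the options of `G`. -/
def grundySet (G : PGame) : Set Nimber :=
  Set.range fun i => grundyValue (G.moveLeft i)
end

/-! If `i₀` is maximal, a move in component `i₀` leaves all other components untouched. By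
induction over pairs of positions, the Grundy value of `S ⋈ X` therefore depends on `X i₀` only
through `Γ₀(X i₀)`: a move lowering the Grundy value at `i₀` is mirrored in the other position
(mex property), a move raising it is answered by a move back to the old value, and moves in other
components are copied. If `Γ₀(G i₀) < Γ₀(H i₀)`, some option `H'` of `H i₀` has
`Γ₀(H') = Γ₀(G i₀)`, so the corresponding option of `S ⋈ H` has the Grundy value of `S ⋈ G`,
which hence differs from `Γ₀(S ⋈ H)`. -/

namespace SetTheory.PGame

instance : WellFoundedLT Nimber.{u} := inferInstanceAs (WellFoundedLT Ordinal.{u})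

theorem grundyValue_eq_sInf (G : PGame.{u}) :
    grundyValue G = sInf (Set.range fun i => grundyValue (G.moveLeft i))ᶜ := by
  cases G; rfl

theorem nonempty_compl_range_nimber {ι : Type u} (f : ι → Nimber.{u}) :
    (Set.range f)ᶜ.Nonempty := by
  obtain ⟨b, hb⟩ : BddAbove (Set.range fun i => (show Ordinal.{u} from f i)) :=
    Ordinal.bddAbove_of_small
  exact ⟨(Order.succ b : Ordinal.{u}), fun ⟨i, hi⟩ =>
    (Order.lt_succ b).not_ge (hi ▸ hb ⟨i, rfl⟩)⟩

theorem grundyValue_moveLeft_ne {G : PGame} (i : G.LeftMoves) :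
    grundyValue (G.moveLeft i) ≠ grundyValue G := by
  intro h
  have hmem := csInf_mem (nonempty_compl_range_nimber fun i => grundyValue (G.moveLeft i))
  rw [← grundyValue_eq_sInf] at hmem
  exact hmem ⟨i, h⟩

theorem grundyValue_le_of_forall_moveLeft_ne {G : PGame} {o : Nimber}
    (h : ∀ i, grundyValue (G.moveLeft i) ≠ o) : grundyValue G ≤ o := by
  rw [grundyValue_eq_sInf]
  exact csInf_le' fun ⟨i, hi⟩ => h i hi

theorem exists_grundyValue_moveLeft_of_lt {G : PGame} {o : Nimber}
    (h : o < grundyValue G) : ∃ i, grundyValue (G.moveLeft i) = o := by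
  by_contra! hne
  exact (grundyValue_le_of_forall_moveLeft_ne hne).not_gt h

theorem exists_moveLeft_eq_of_eq {G H : PGame} (h : G = H) (i : G.LeftMoves) :
    ∃ j : H.LeftMoves, H.moveLeft j = G.moveLeft i := by
  subst h; exact ⟨i, rfl⟩

end SetTheory.PGame

section OrderedJoin

open Relation

variable {S : Type}

def GrundyAgreeAt (i₀ : S) (X Y : S → PGame) : Prop :=
  (∀ i, i ≠ i₀ → X i = Y i) ∧ grundyValue (X i₀) = grundyValue (Y i₀)

theorem GrundyAgreeAt.symm {i₀ : S} {X Y : S → PGame} (h : GrundyAgreeAt i₀ X Y) :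
    GrundyAgreeAt i₀ Y X :=
  ⟨fun i hi => (h.1 i hi).symm, h.2.symm⟩

variable [PartialOrder S]

theorem ojoinAcc_eq_mk (x : S → PGame) (h : Acc OJRel x) :
    ojoinAcc x h = PGame.mk (Σ i : S, (x i).LeftMoves) (Σ i : S, (x i).RightMoves)
      (fun p => ojoinAcc _ (h.inv (ojrel_L x p.1 p.2)))
      (fun p => ojoinAcc _ (h.inv (ojrel_R x p.1 p.2))) := by
  cases h; rfl

theorem ojoin_eq_mk {x : S → PGame} (h : Acc OJRel x) :
    ojoin x = PGame.mk (Σ i : S, (x i).LeftMoves) (Σ i : S, (x i).RightMoves)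
      (fun p => ojoin (ojNextL x p.1 p.2)) (fun p => ojoin (ojNextR x p.1 p.2)) := by
  unfold ojoin
  rw [dif_pos h, ojoinAcc_eq_mk]
  congr 1 <;> funext p
  · rw [dif_pos (h.inv (ojrel_L x p.1 p.2))]
  · rw [dif_pos (h.inv (ojrel_R x p.1 p.2))]

theorem grundyValue_ojoin_ojNextL_ne {x : S → PGame} (h : Acc OJRel x) (i : S)
    (j : (x i).LeftMoves) : grundyValue (ojoin (ojNextL x i j)) ≠ grundyValue (ojoin x) := by
  rw [ojoin_eq_mk h]
  exact grundyValue_moveLeft_ne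
    (G := mk _ _ (fun p : Σ i, (x i).LeftMoves => ojoin (ojNextL x p.1 p.2)) _) ⟨i, j⟩

theorem grundyValue_ojoin_le_of_forall_ne {x : S → PGame} (h : Acc OJRel x) {o : Nimber}
    (hne : ∀ i (j : (x i).LeftMoves), grundyValue (ojoin (ojNextL x i j)) ≠ o) :
    grundyValue (ojoin x) ≤ o := by
  rw [ojoin_eq_mk h]
  exact grundyValue_le_of_forall_moveLeft_ne fun p => hne p.1 p.2

theorem ojNextL_apply_self (x : S → PGame) (i : S) (j : (x i).LeftMoves) :
    ojNextL x i j i = (x i).moveLeft j :=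
  if_pos rfl

theorem ojNextL_apply_of_maximal {i₀ : S} (hmax : ∀ i, ¬ i₀ < i) (x : S → PGame)
    (j : (x i₀).LeftMoves) {i : S} (hi : i ≠ i₀) : ojNextL x i₀ j i = x i := by
  simp [ojNextL, hi, hmax i]

theorem GrundyAgreeAt.exists_ojNextL {i₀ i : S} {X Y : S → PGame} (h : GrundyAgreeAt i₀ X Y)
    (hi : i ≠ i₀) (k : (Y i).LeftMoves) :
    ∃ k' : (X i).LeftMoves, GrundyAgreeAt i₀ (ojNextL X i k') (ojNextL Y i k) := by
  obtain ⟨k', hk'⟩ := exists_moveLeft_eq_of_eq (h.1 i hi).symm k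
  refine ⟨k', fun m hm => ?_, ?_⟩
  · by_cases hmi : m = i
    · subst hmi; simp only [ojNextL_apply_self, hk']
    · simp [ojNextL, hmi, h.1 m hm]
  · by_cases hlt : i < i₀ <;> simp [ojNextL, hi.symm, hlt, h.2]

theorem GrundyAgreeAt.ojNextL_ojNextL {i₀ : S} (hmax : ∀ i, ¬ i₀ < i) {X Y : S → PGame}
    (h : ∀ i, i ≠ i₀ → X i = Y i) (j : (X i₀).LeftMoves) (k : (Y i₀).LeftMoves)
    (hjk : grundyValue ((X i₀).moveLeft j) = grundyValue ((Y i₀).moveLeft k)) :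
    GrundyAgreeAt i₀ (ojNextL X i₀ j) (ojNextL Y i₀ k) :=
  ⟨fun i hi => by rw [ojNextL_apply_of_maximal hmax _ _ hi, ojNextL_apply_of_maximal hmax _ _ hi,
    h i hi], by rw [ojNextL_apply_self, ojNextL_apply_self, hjk]⟩

theorem GrundyAgreeAt.ojNextL_right {i₀ : S} (hmax : ∀ i, ¬ i₀ < i) {X Y : S → PGame}
    (h : ∀ i, i ≠ i₀ → X i = Y i) (k : (Y i₀).LeftMoves)
    (hk : grundyValue (X i₀) = grundyValue ((Y i₀).moveLeft k)) :
    GrundyAgreeAt i₀ X (ojNextL Y i₀ k) :=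
  ⟨fun i hi => by rw [ojNextL_apply_of_maximal hmax _ _ hi, h i hi], by rw [ojNextL_apply_self, hk]⟩

theorem grundyValue_ojoin_le_of_grundyAgreeAt {i₀ : S} (hmax : ∀ i, ¬ i₀ < i) {X Y : S → PGame}
    (hX : Acc OJRel X) (hY : Acc OJRel Y) (h : GrundyAgreeAt i₀ X Y)
    (ih : ∀ X' Y', TransGen (Sym2.GameAdd OJRel) s(X', Y') s(X, Y) →
      Acc OJRel X' → Acc OJRel Y' → GrundyAgreeAt i₀ X' Y' →
      grundyValue (ojoin X') = grundyValue (ojoin Y')) :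
    grundyValue (ojoin Y) ≤ grundyValue (ojoin X) := by
  refine grundyValue_ojoin_le_of_forall_ne hY fun i k => ?_
  have hY' : Acc OJRel (ojNextL Y i k) := hY.inv (ojrel_L Y i k)
  by_cases hi : i = i₀
  · subst hi
    rcases (grundyValue_moveLeft_ne k).lt_or_gt with hlt | hgt
    · rw [← h.2] at hlt
      obtain ⟨k', hk'⟩ := exists_grundyValue_moveLeft_of_lt hlt
      rw [← ih _ _ (.tail (.single (.snd (ojrel_L Y i k))) (.fst (ojrel_L X i k')))
        (hX.inv (ojrel_L X i k')) hY' (.ojNextL_ojNextL hmax h.1 k' k hk')]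
      exact grundyValue_ojoin_ojNextL_ne hX i k'
    · -- a move raising the Grundy value at the maximal index is answered by one restoring it
      rw [← ojNextL_apply_self Y i k] at hgt
      obtain ⟨k₂, hk₂⟩ := exists_grundyValue_moveLeft_of_lt hgt
      have hXY' : ∀ m, m ≠ i → X m = ojNextL Y i k m := fun m hm => by
        rw [ojNextL_apply_of_maximal hmax _ _ hm, h.1 m hm]
      rw [ih _ _ (.tail (.single (.snd (ojrel_L _ i k₂))) (.snd (ojrel_L Y i k))) hX
        (hY'.inv (ojrel_L _ i k₂)) (.ojNextL_right hmax hXY' k₂ (h.2.trans hk₂.symm))]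
      exact (grundyValue_ojoin_ojNextL_ne hY' i k₂).symm
  · obtain ⟨k', hk'⟩ := h.exists_ojNextL hi k
    rw [← ih _ _ (.tail (.single (.snd (ojrel_L Y i k))) (.fst (ojrel_L X i k')))
      (hX.inv (ojrel_L X i k')) hY' hk']
    exact grundyValue_ojoin_ojNextL_ne hX i k'

theorem grundyValue_ojoin_eq_of_grundyAgreeAt {i₀ : S} (hmax : ∀ i, ¬ i₀ < i)
    {X Y : S → PGame} (hX : Acc OJRel X) (hY : Acc OJRel Y) (h : GrundyAgreeAt i₀ X Y) :
    grundyValue (ojoin X) = grundyValue (ojoin Y) := by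
  suffices H : ∀ z, Acc (TransGen (Sym2.GameAdd OJRel)) z → ∀ X Y, s(X, Y) = z →
      Acc OJRel X → Acc OJRel Y → GrundyAgreeAt i₀ X Y →
      grundyValue (ojoin X) = grundyValue (ojoin Y) from
    H _ (hX.sym2_gameAdd hY).transGen X Y rfl hX hY h
  intro z hz
  induction hz with
  | intro z _ ih =>
    rintro X Y rfl hX hY h
    have ih' := fun X' Y' hlt => ih s(X', Y') hlt X' Y' rfl
    exact le_antisymm
      (grundyValue_ojoin_le_of_grundyAgreeAt hmax hY hX h.symm fun X' Y' hlt =>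
        ih' X' Y' (by rwa [Sym2.eq_swap (a := Y)] at hlt))
      (grundyValue_ojoin_le_of_grundyAgreeAt hmax hX hY h ih')

theorem grundyValue_ojoin_ne_of_lt {G H : S → PGame} (hG : Acc OJRel G) (hH : Acc OJRel H)
    {i₀ : S} (hmax : ∀ i, ¬ i₀ < i) (heq : ∀ i, i ≠ i₀ → G i = H i)
    (hlt : grundyValue (G i₀) < grundyValue (H i₀)) :
    grundyValue (ojoin G) ≠ grundyValue (ojoin H) := by
  obtain ⟨j, hj⟩ := exists_grundyValue_moveLeft_of_lt hlt
  have hH' := hH.inv (ojrel_L H i₀ j)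
  rw [grundyValue_ojoin_eq_of_grundyAgreeAt hmax hG hH' (.ojNextL_right hmax heq j hj.symm)]
  exact grundyValue_ojoin_ojNextL_ne hH i₀ j

end OrderedJoin

theorem ojoin_special_substitution_converse_general {S : Type} [PartialOrder S] (G H : S → PGame)
    (hG : Acc OJRel G) (hH : Acc OJRel H)
    (i₀ : S) (hmax : ∀ i : S, ¬ i₀ < i)
    (heq : ∀ i, i ≠ i₀ → G i = H i)
    (hne : grundyValue (G i₀) ≠ grundyValue (H i₀)) :
    grundyValue (ojoin G) ≠ grundyValue (ojoin H) := by
  rcases hne.lt_or_gt with hlt | hgt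
  · exact grundyValue_ojoin_ne_of_lt hG hH hmax heq hlt
  · exact (grundyValue_ojoin_ne_of_lt hH hG hmax (fun i hi => (heq i hi).symm) hgt).symm

/-- converse of the special substitution theorem: with `i₀` maximal in `S`
and all other components equal, if `Γ₀(G i₀) ≠ Γ₀(H i₀)` then `Γ₀(S ⋈ G) ≠ Γ₀(S ⋈ H)`. -/
theorem ojoin_special_substitution_converse {S : Type} [PartialOrder S] (G H : S → PGame)
    (hGI : ∀ i, (G i).Impartial) (hHI : ∀ i, (H i).Impartial)
    (hG : Acc OJRel G) (hH : Acc OJRel H)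
    (i₀ : S) (hmax : ∀ i : S, ¬ i₀ < i)
    (heq : ∀ i, i ≠ i₀ → G i = H i)
    (hne : grundyValue (G i₀) ≠ grundyValue (H i₀)) :
    grundyValue (ojoin G) ≠ grundyValue (ojoin H) :=
  ojoin_special_substitution_converse_general G H hG hH i₀ hmax heq hne
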